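/- Let f : ℝ^d → ℂ be measurable and of class C¹, and for each n ∈ ℤ^d let Λ_n = n + [0,1]^d. If ∫_Γ |f(ξ)|²⟨ξ⟩^{2s} dξ < ∞ over a set Γ containing all cubes Λ_n for n ∈ Γ₁∩ℤ^d with |n| ≥ r, and the gradient bound sup_{θ∈[0,1]} ∫_Γ |∇f(ξ + θ(n_ξ − ξ))|²⟨ξ⟩^{2s} dξ < ∞ holds (where n_ξ ∈ ℤ^d is the corner of the cube containing ξ), then Σ_{n∈Γ₁∩ℤ^d} |f(n)|²⟨n⟩^{2s} < ∞. -/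

import Mathlib

open MeasureTheory
open scoped ENNReal

/-- The Japanese bracket `⟨x⟩ = (1+|x|²)^{1/2}` on `ℝ^d`. -/
noncomputable def jb {d : ℕ} (x : EuclideanSpace ℝ (Fin d)) : ℝ := Real.sqrt (1 + ‖x‖ ^ 2)

/-- The embedding of the lattice `ℤ^d` into `ℝ^d`. -/
noncomputable def latt {d : ℕ} (n : Fin d → ℤ) : EuclideanSpace ℝ (Fin d) :=
  WithLp.toLp 2 (fun i => (n i : ℝ))

/-- The componentwise floor of `ξ ∈ ℝ^d`, the lattice corner of the unit cube containing `ξ`. -/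
noncomputable def flr {d : ℕ} (ξ : EuclideanSpace ℝ (Fin d)) : Fin d → ℤ :=
  fun i => ⌊ξ i⌋

/-- The closed unit cube `Λ_n = n + [0,1]^d`. -/
def cubeAt {d : ℕ} (n : Fin d → ℤ) : Set (EuclideanSpace ℝ (Fin d)) :=
  {ξ | ∀ i, ξ i ∈ Set.Icc ((n i : ℝ)) ((n i : ℝ) + 1)}

namespace Stmt17Aux

variable {d : ℕ}

/-- half-open cube -/
def cube' (n : Fin d → ℤ) : Set (EuclideanSpace ℝ (Fin d)) :=
  {ξ | ∀ i, ξ i ∈ Set.Ico ((n i : ℝ)) ((n i : ℝ) + 1)}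

lemma cube'_subset (n : Fin d → ℤ) : cube' n ⊆ cubeAt n :=
  fun _ h i => ⟨(h i).1, le_of_lt (h i).2⟩

lemma one_le_jb (x : EuclideanSpace ℝ (Fin d)) : 1 ≤ jb x := by
  rw [jb]; exact Real.one_le_sqrt.2 (by nlinarith [sq_nonneg ‖x‖])

lemma jb_pos (x : EuclideanSpace ℝ (Fin d)) : 0 < jb x := lt_of_lt_of_le one_pos (one_le_jb x)

lemma mem_cube'_iff (n : Fin d → ℤ) (ξ : EuclideanSpace ℝ (Fin d)) :
    ξ ∈ cube' n ↔ flr ξ = n := by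
  constructor
  · intro h; funext i
    exact Int.floor_eq_iff.2 ⟨(h i).1, by exact_mod_cast (h i).2⟩
  · rintro rfl i
    exact ⟨Int.floor_le _, Int.lt_floor_add_one _⟩

lemma cube'_disj {n m : Fin d → ℤ} (h : n ≠ m) : Disjoint (cube' n) (cube' m) := by
  rw [Set.disjoint_left]
  intro ξ hn hm
  exact h (((mem_cube'_iff n ξ).1 hn).symm.trans ((mem_cube'_iff m ξ).1 hm))

lemma norm_sub_le_sqrt (n : Fin d → ℤ) {ξ : EuclideanSpace ℝ (Fin d)} (h : ξ ∈ cube' n) :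
    ‖latt n - ξ‖ ≤ Real.sqrt d := by
  rw [EuclideanSpace.norm_eq]
  apply Real.sqrt_le_sqrt
  calc ∑ i, ‖(latt n - ξ) i‖ ^ 2 ≤ ∑ _i : Fin d, (1:ℝ) := by
        apply Finset.sum_le_sum
        intro i _
        have h1 := (h i).1
        have h2 := (h i).2
        have : ‖(latt n - ξ) i‖ ≤ 1 := by
          simp only [latt, PiLp.sub_apply, PiLp.toLp_apply]
          rw [Real.norm_eq_abs, abs_le]
          constructor <;> nlinarith
        nlinarith [norm_nonneg ((latt n - ξ) i)]
    _ = d := by simp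

lemma cube'_eq_preimage (n : Fin d → ℤ) :
    cube' n = (MeasurableEquiv.toLp 2 (Fin d → ℝ)).symm ⁻¹'
      (Set.univ.pi fun i => Set.Ico ((n i : ℝ)) ((n i : ℝ) + 1)) := by
  ext ξ; simp [cube', Set.mem_pi, MeasurableEquiv.coe_toLp_symm]

lemma measurableSet_cube' (n : Fin d → ℤ) : MeasurableSet (cube' n) := by
  rw [cube'_eq_preimage]
  exact (MeasurableEquiv.measurable _) (MeasurableSet.univ_pi fun i => measurableSet_Ico)

lemma volume_cube' (n : Fin d → ℤ) : volume (cube' n) = 1 := by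
  rw [cube'_eq_preimage,
    (EuclideanSpace.volume_preserving_symm_measurableEquiv_toLp (Fin d)).measure_preimage
      ((MeasurableSet.univ_pi fun i => measurableSet_Ico).nullMeasurableSet)]
  rw [volume_pi_pi]
  simp

lemma finite_small (r : ℝ) : {n : Fin d → ℤ | ‖latt n‖ < r}.Finite := by
  apply Set.Finite.subset (Set.Finite.pi (fun i : Fin d => Set.finite_Icc (-⌈r⌉) ⌈r⌉))
  intro n hn
  simp only [Set.mem_pi, Set.mem_univ, Set.mem_Icc, forall_true_left]
  intro i
  have hni : |(n i : ℝ)| ≤ ‖latt n‖ := by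
    have h0 : ‖latt n‖ = Real.sqrt (∑ j, ‖latt n j‖ ^ 2) := EuclideanSpace.norm_eq _
    rw [h0]
    have h1 : |(n i : ℝ)| = Real.sqrt (‖latt n i‖ ^ 2) := by
      rw [Real.sqrt_sq_eq_abs]; simp [latt]
    rw [h1]
    apply Real.sqrt_le_sqrt
    exact Finset.single_le_sum (f := fun j => ‖latt n j‖ ^ 2) (fun j _ => by positivity)
      (Finset.mem_univ i)
  have h2 : |(n i : ℝ)| ≤ (⌈r⌉ : ℝ) := le_trans hni (le_trans (le_of_lt hn) (Int.le_ceil r))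
  rw [abs_le] at h2
  exact ⟨by exact_mod_cast h2.1, by exact_mod_cast h2.2⟩

lemma jb_le_jb {x y : EuclideanSpace ℝ (Fin d)} (h : ‖x - y‖ ≤ Real.sqrt d) :
    jb x ≤ (1 + Real.sqrt d) * jb y := by
  have hc : (0:ℝ) ≤ Real.sqrt d := Real.sqrt_nonneg _
  have hx : ‖x‖ ≤ ‖y‖ + Real.sqrt d := by
    have := norm_sub_norm_le x y
    linarith
  have h1 : 1 + ‖x‖^2 ≤ (1 + Real.sqrt d)^2 * (1 + ‖y‖^2) := by
    nlinarith [norm_nonneg x, norm_nonneg y, sq_nonneg (‖y‖ - 1),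
      mul_nonneg hc (sq_nonneg ‖y‖), mul_nonneg (mul_nonneg hc hc) (sq_nonneg ‖y‖)]
  calc jb x = Real.sqrt (1 + ‖x‖^2) := rfl
    _ ≤ Real.sqrt ((1 + Real.sqrt d)^2 * (1 + ‖y‖^2)) := Real.sqrt_le_sqrt h1
    _ = (1 + Real.sqrt d) * jb y := by
        rw [Real.sqrt_mul (by positivity), Real.sqrt_sq (by positivity)]; rfl

lemma jb_rpow_le {x y : EuclideanSpace ℝ (Fin d)} (s : ℝ) (h : ‖x - y‖ ≤ Real.sqrt d) :
    jb x ^ (2*s) ≤ (1 + Real.sqrt d) ^ (2*|s|) * jb y ^ (2*s) := by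
  have hc : (1:ℝ) ≤ 1 + Real.sqrt d := le_add_of_nonneg_right (Real.sqrt_nonneg _)
  have hjx : (0:ℝ) < jb x := jb_pos x
  have hjy : (0:ℝ) < jb y := jb_pos y
  rcases le_or_gt 0 s with hs | hs
  · have h2 : jb x ≤ (1 + Real.sqrt d) * jb y := jb_le_jb h
    have : jb x ^ (2*s) ≤ ((1 + Real.sqrt d) * jb y) ^ (2*s) :=
      Real.rpow_le_rpow (le_of_lt hjx) h2 (by linarith)
    rw [Real.mul_rpow (by positivity) (le_of_lt hjy)] at this
    rwa [abs_of_nonneg hs]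
  · have h2 : jb y ≤ (1 + Real.sqrt d) * jb x := jb_le_jb (by rwa [norm_sub_rev])
    have h3 : jb y ^ (2*s) ≥ ((1 + Real.sqrt d) * jb x) ^ (2*s) :=
      Real.rpow_le_rpow_of_nonpos (by positivity) h2 (by linarith)
    rw [Real.mul_rpow (by positivity) (le_of_lt hjx)] at h3
    rw [abs_of_neg hs]
    have h4 : (1 + Real.sqrt d) ^ (2*s) > 0 := Real.rpow_pos_of_pos (by linarith) _
    calc jb x ^ (2*s)
        = ((1 + Real.sqrt d) ^ (2*s))⁻¹ * ((1 + Real.sqrt d) ^ (2*s) * jb x ^ (2*s)) := by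
          field_simp
      _ ≤ ((1 + Real.sqrt d) ^ (2*s))⁻¹ * jb y ^ (2*s) := by
          apply mul_le_mul_of_nonneg_left h3 (le_of_lt (inv_pos.2 h4))
      _ = (1 + Real.sqrt d) ^ (2*(-s)) * jb y ^ (2*s) := by
          rw [← Real.rpow_neg (by linarith)]; ring_nf

lemma ftc_bound {F : EuclideanSpace ℝ (Fin d) → ℂ} (hF : ContDiff ℝ 1 F)
    (ξ v : EuclideanSpace ℝ (Fin d)) :
    ‖F (ξ + v) - F ξ‖ ≤ (∫ θ in (0:ℝ)..1, ‖fderiv ℝ F (ξ + θ • v)‖) * ‖v‖ := by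
  have hdiff : ∀ θ : ℝ, HasDerivAt (fun t : ℝ => F (ξ + t • v))
      (fderiv ℝ F (ξ + θ • v) v) θ := by
    intro θ
    have hline : HasDerivAt (fun t : ℝ => ξ + t • v) v θ := by
      simpa using ((hasDerivAt_id θ).smul_const v).const_add ξ
    have hf := (hF.differentiable one_ne_zero).differentiableAt (x := ξ + θ • v)
    exact hf.hasFDerivAt.comp_hasDerivAt θ hline
  have hcont : Continuous fun θ : ℝ => fderiv ℝ F (ξ + θ • v) v := by
    have h1 : Continuous (fderiv ℝ F) := hF.continuous_fderiv one_ne_zero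
    have h2 : Continuous fun θ : ℝ => ξ + θ • v := by continuity
    exact (ContinuousLinearMap.apply ℝ ℂ v).continuous.comp (h1.comp h2)
  have heq : F (ξ + v) - F ξ = ∫ θ in (0:ℝ)..1, fderiv ℝ F (ξ + θ • v) v := by
    rw [intervalIntegral.integral_eq_sub_of_hasDerivAt (fun θ _ => hdiff θ)
      (hcont.intervalIntegrable 0 1)]
    simp
  rw [heq]
  calc ‖∫ θ in (0:ℝ)..1, fderiv ℝ F (ξ + θ • v) v‖
      ≤ ∫ θ in (0:ℝ)..1, ‖fderiv ℝ F (ξ + θ • v) v‖ :=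
        intervalIntegral.norm_integral_le_integral_norm zero_le_one
    _ ≤ ∫ θ in (0:ℝ)..1, ‖fderiv ℝ F (ξ + θ • v)‖ * ‖v‖ := by
        apply intervalIntegral.integral_mono_on zero_le_one
        · exact (hcont.norm).intervalIntegrable 0 1
        · apply Continuous.intervalIntegrable
          have h1 : Continuous (fderiv ℝ F) := hF.continuous_fderiv one_ne_zero
          have h2 : Continuous fun θ : ℝ => ξ + θ • v := by continuity
          exact ((h1.comp h2).norm).mul continuous_const
        · intro θ _
          exact (fderiv ℝ F (ξ + θ • v)).le_opNorm v
    _ = (∫ θ in (0:ℝ)..1, ‖fderiv ℝ F (ξ + θ • v)‖) * ‖v‖ := by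
        rw [intervalIntegral.integral_mul_const]

lemma cs_bound {h : ℝ → ℝ} (hcont : Continuous h) (hnn : ∀ θ, 0 ≤ h θ) :
    ENNReal.ofReal (∫ θ in (0:ℝ)..1, h θ) ^ 2
      ≤ ∫⁻ θ in Set.Ioc (0:ℝ) 1, ENNReal.ofReal (h θ ^ 2) := by
  have hint : IntegrableOn h (Set.Ioc (0:ℝ) 1) volume :=
    (hcont.integrableOn_Icc (a := 0) (b := 1)).mono_set Set.Ioc_subset_Icc_self
  rw [intervalIntegral.integral_of_le zero_le_one,
    ofReal_integral_eq_lintegral_ofReal hint (Filter.Eventually.of_forall hnn)]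
  set μ := volume.restrict (Set.Ioc (0:ℝ) 1)
  have hμ : μ Set.univ = 1 := by
    simp [μ, Measure.restrict_apply, Real.volume_Ioc]
  have hCS := ENNReal.lintegral_mul_le_Lp_mul_Lq μ
    ((Real.holderConjugate_iff (p := 2) (q := 2)).2 ⟨one_lt_two, by norm_num⟩)
    (f := fun θ => ENNReal.ofReal (h θ)) (g := fun _ => 1)
    ((ENNReal.measurable_ofReal.comp hcont.measurable).aemeasurable)
    aemeasurable_const
  simp only [mul_one, ENNReal.one_rpow, Pi.mul_apply] at hCS
  rw [lintegral_const, hμ, mul_one, ENNReal.one_rpow] at hCS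
  calc (∫⁻ θ, ENNReal.ofReal (h θ) ∂μ) ^ 2
      ≤ ((∫⁻ θ, ENNReal.ofReal (h θ) ^ (2:ℝ) ∂μ) ^ ((1:ℝ)/2) * 1) ^ 2 := by
        apply pow_le_pow_left' (le_trans hCS (le_of_eq (by norm_num)))
    _ = ∫⁻ θ, ENNReal.ofReal (h θ ^ 2) ∂μ := by
        rw [mul_one, ← ENNReal.rpow_natCast _ 2, ← ENNReal.rpow_mul]
        norm_num
        apply lintegral_congr
        intro θ
        exact (ENNReal.ofReal_pow (hnn θ) 2).symm

/-- the θ-lintegral of the squared gradient along the segment. -/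
noncomputable def gfun (F : EuclideanSpace ℝ (Fin d) → ℂ) (ξ : EuclideanSpace ℝ (Fin d)) : ℝ≥0∞ :=
  ∫⁻ θ in Set.Ioc (0:ℝ) 1, ENNReal.ofReal (‖fderiv ℝ F (ξ + θ • (latt (flr ξ) - ξ))‖ ^ 2)

lemma key {F : EuclideanSpace ℝ (Fin d) → ℂ} (hF : ContDiff ℝ 1 F) (s : ℝ)
    (n : Fin d → ℤ) {ξ : EuclideanSpace ℝ (Fin d)} (hξ : ξ ∈ cube' n) :
    ENNReal.ofReal (‖F (latt n)‖^2 * jb (latt n) ^ (2*s)) ≤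
      ENNReal.ofReal ((1 + Real.sqrt d) ^ (2*|s|)) *
        (ENNReal.ofReal 2 * ENNReal.ofReal (‖F ξ‖^2 * jb ξ ^ (2*s)) +
         ENNReal.ofReal (2*(d:ℝ)) * (ENNReal.ofReal (jb ξ ^ (2*s)) * gfun F ξ)) := by
  set a := latt n with ha
  set v := a - ξ with hv
  have hflr : flr ξ = n := (mem_cube'_iff n ξ).1 hξ
  have hav : ξ + v = a := by rw [hv]; abel
  set I := ∫ θ in (0:ℝ)..1, ‖fderiv ℝ F (ξ + θ • v)‖ with hI
  have hInn : 0 ≤ I := intervalIntegral.integral_nonneg zero_le_one (fun θ _ => norm_nonneg _)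
  have hvd : ‖v‖ ≤ Real.sqrt d := norm_sub_le_sqrt n hξ
  have hftc : ‖F a - F ξ‖ ≤ I * Real.sqrt d := by
    calc ‖F a - F ξ‖ = ‖F (ξ + v) - F ξ‖ := by rw [hav]
      _ ≤ I * ‖v‖ := ftc_bound hF ξ v
      _ ≤ I * Real.sqrt d := mul_le_mul_of_nonneg_left hvd hInn
  have htri : ‖F a‖ ≤ ‖F ξ‖ + I * Real.sqrt d := by
    have := norm_sub_norm_le (F a) (F ξ)
    linarith
  have hsq : ‖F a‖^2 ≤ 2*‖F ξ‖^2 + 2*(d:ℝ)*I^2 := by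
    have hd : Real.sqrt d ^ 2 = (d:ℝ) := Real.sq_sqrt (Nat.cast_nonneg d)
    nlinarith [norm_nonneg (F a), norm_nonneg (F ξ), sq_nonneg (‖F ξ‖ - I * Real.sqrt d),
      mul_nonneg hInn (Real.sqrt_nonneg (d:ℝ))]
  have hjb : jb a ^ (2*s) ≤ (1 + Real.sqrt d) ^ (2*|s|) * jb ξ ^ (2*s) :=
    jb_rpow_le s (by rw [← hv]; exact hvd)
  have hreal : ‖F a‖^2 * jb a ^ (2*s) ≤
      (1 + Real.sqrt d) ^ (2*|s|) *
        (2*(‖F ξ‖^2 * jb ξ ^ (2*s)) + (2*(d:ℝ))*(I^2 * jb ξ ^ (2*s))) := by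
    have := mul_le_mul hsq hjb (Real.rpow_nonneg (le_of_lt (jb_pos a)) _) (by positivity)
    nlinarith [this]
  calc ENNReal.ofReal (‖F a‖^2 * jb a ^ (2*s))
      ≤ ENNReal.ofReal ((1 + Real.sqrt d) ^ (2*|s|) *
          (2*(‖F ξ‖^2 * jb ξ ^ (2*s)) + (2*(d:ℝ))*(I^2 * jb ξ ^ (2*s)))) :=
        ENNReal.ofReal_le_ofReal hreal
    _ = ENNReal.ofReal ((1 + Real.sqrt d) ^ (2*|s|)) *
          (ENNReal.ofReal 2 * ENNReal.ofReal (‖F ξ‖^2 * jb ξ ^ (2*s)) +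
           ENNReal.ofReal (2*(d:ℝ)) * (ENNReal.ofReal (jb ξ ^ (2*s)) * ENNReal.ofReal (I^2))) := by
        have hjnn : 0 ≤ jb ξ ^ (2*s) := Real.rpow_nonneg (jb_pos ξ).le _
        have hKnn : (0:ℝ) ≤ (1 + Real.sqrt d) ^ (2*|s|) :=
          Real.rpow_nonneg (by positivity) _
        rw [ENNReal.ofReal_mul hKnn,
          ENNReal.ofReal_add (mul_nonneg (by norm_num) (mul_nonneg (sq_nonneg _) hjnn))
            (mul_nonneg (by positivity) (mul_nonneg (sq_nonneg _) hjnn)),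
          ENNReal.ofReal_mul (by norm_num : (0:ℝ) ≤ 2),
          ENNReal.ofReal_mul (by positivity : (0:ℝ) ≤ 2*(d:ℝ)),
          mul_comm (I^2) (jb ξ ^ (2*s)), ENNReal.ofReal_mul hjnn]
    _ ≤ _ := by
        apply mul_le_mul_right
        apply add_le_add_right
        apply mul_le_mul_right
        apply mul_le_mul_right
        have hcont : Continuous fun θ : ℝ => ‖fderiv ℝ F (ξ + θ • v)‖ := by
          have h1 : Continuous (fderiv ℝ F) := hF.continuous_fderiv one_ne_zero
          have h2 : Continuous fun θ : ℝ => ξ + θ • v := by continuity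
          exact (h1.comp h2).norm
        have hcs := cs_bound hcont (fun θ => norm_nonneg _)
        rw [← hI] at hcs
        calc ENNReal.ofReal (I^2) = ENNReal.ofReal I ^ 2 := ENNReal.ofReal_pow hInn 2
          _ ≤ ∫⁻ θ in Set.Ioc (0:ℝ) 1,
                ENNReal.ofReal (‖fderiv ℝ F (ξ + θ • v)‖ ^ 2) := hcs
          _ = gfun F ξ := by rw [gfun, hflr]

end Stmt17Aux

open Stmt17Aux

/-- From the continuous weighted `L²` bound on a cone `Γ` (containing all unit cubes
`Λ_n`, `n ∈ Γ₁ ∩ ℤ^d`, `|n| ≥ r`) together with a uniform weighted `L²` bound for the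
gradient along the segments towards the cube corners, one deduces the discrete weighted
`l²` bound `Σ_{n∈Γ₁∩ℤ^d} |F(n)|²⟨n⟩^{2s} < ∞` for `F ∈ C¹`. -/

theorem stmt17 {d : ℕ} (F : EuclideanSpace ℝ (Fin d) → ℂ) (hF : ContDiff ℝ 1 F)
    (s : ℝ) (Γ Γ₁ : Set (EuclideanSpace ℝ (Fin d))) (r : ℝ)
    (hcubes : ∀ n : Fin d → ℤ, latt n ∈ Γ₁ → r ≤ ‖latt n‖ → cubeAt n ⊆ Γ)
    (hL2 : ∫⁻ ξ in Γ, ENNReal.ofReal (‖F ξ‖ ^ 2 * jb ξ ^ (2 * s)) < ⊤)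
    (hgrad : ∃ B : ℝ≥0∞, B < ⊤ ∧ ∀ θ ∈ Set.Icc (0 : ℝ) 1,
      ∫⁻ ξ in Γ,
        ENNReal.ofReal (‖fderiv ℝ F (ξ + θ • (latt (flr ξ) - ξ))‖ ^ 2 * jb ξ ^ (2 * s))
        ≤ B) :
    Summable (fun n : {n : Fin d → ℤ // latt n ∈ Γ₁} =>
      ‖F (latt (n : Fin d → ℤ))‖ ^ 2 * jb (latt (n : Fin d → ℤ)) ^ (2 * s)) := by
  classical
  obtain ⟨B, hBlt, hgB⟩ := hgrad
  set K : ℝ≥0∞ := ENNReal.ofReal ((1 + Real.sqrt d) ^ (2*|s|)) with hKdef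
  set A : ℝ≥0∞ := ∫⁻ ξ in Γ, ENNReal.ofReal (‖F ξ‖ ^ 2 * jb ξ ^ (2 * s)) with hAdef
  set C : ℝ≥0∞ := K * (ENNReal.ofReal 2 * A + ENNReal.ofReal (2*(d:ℝ)) * B) with hCdef
  have hCfin : C ≠ ⊤ := by
    apply ENNReal.mul_ne_top ENNReal.ofReal_ne_top
    exact ENNReal.add_ne_top.2 ⟨ENNReal.mul_ne_top ENNReal.ofReal_ne_top hL2.ne,
      ENNReal.mul_ne_top ENNReal.ofReal_ne_top hBlt.ne⟩
  -- continuity / measurability facts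
  have hjbcont : Continuous (jb (d := d)) := by
    apply Real.continuous_sqrt.comp
    exact continuous_const.add (continuous_norm.pow 2)
  have hjbr : Continuous fun ξ : EuclideanSpace ℝ (Fin d) => jb ξ ^ (2*s) :=
    hjbcont.rpow_const (fun ξ => Or.inl (ne_of_gt (jb_pos ξ)))
  have hmF2 : Measurable fun ξ : EuclideanSpace ℝ (Fin d) =>
      ENNReal.ofReal (‖F ξ‖ ^ 2 * jb ξ ^ (2 * s)) := by
    apply ENNReal.measurable_ofReal.comp
    exact (((hF.continuous.norm.pow 2).mul hjbr)).measurable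
  have hmlf : Measurable fun ξ : EuclideanSpace ℝ (Fin d) => latt (flr ξ) := by
    unfold latt
    apply (WithLp.measurable_toLp 2 _).comp
    apply measurable_pi_lambda
    intro i
    have h1 : Measurable fun ξ : EuclideanSpace ℝ (Fin d) => ξ i :=
      (measurable_pi_apply i).comp (WithLp.measurable_ofLp 2 _)
    exact measurable_from_top.comp h1.floor
  have hcontD : Continuous (fderiv ℝ F) := hF.continuous_fderiv one_ne_zero
  have hmΦ : Measurable fun p : EuclideanSpace ℝ (Fin d) × ℝ =>
      ENNReal.ofReal (‖fderiv ℝ F (p.1 + p.2 • (latt (flr p.1) - p.1))‖ ^ 2) := by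
    apply ENNReal.measurable_ofReal.comp
    apply ((continuous_norm.comp hcontD).pow 2).measurable.comp
    exact measurable_fst.add (measurable_snd.smul ((hmlf.comp measurable_fst).sub measurable_fst))
  have hmg : Measurable (gfun F) :=
    Measurable.lintegral_prod_right' (f := fun p : EuclideanSpace ℝ (Fin d) × ℝ =>
      ENNReal.ofReal (‖fderiv ℝ F (p.1 + p.2 • (latt (flr p.1) - p.1))‖ ^ 2)) hmΦ
  set h : EuclideanSpace ℝ (Fin d) → ℝ≥0∞ := fun ξ =>
    K * (ENNReal.ofReal 2 * ENNReal.ofReal (‖F ξ‖^2 * jb ξ ^ (2*s)) +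
      ENNReal.ofReal (2*(d:ℝ)) * (ENNReal.ofReal (jb ξ ^ (2*s)) * gfun F ξ)) with hhdef
  have hmh : Measurable h := by
    apply Measurable.const_mul
    apply Measurable.fun_add
    · exact hmF2.const_mul _
    · exact ((ENNReal.measurable_ofReal.comp hjbr.measurable).mul hmg).const_mul _
  -- Step 4 : the gradient term over Γ is at most B
  have step4 : (∫⁻ ξ in Γ, ENNReal.ofReal (jb ξ ^ (2*s)) * gfun F ξ) ≤ B := by
    have hswap : (∫⁻ ξ in Γ, ENNReal.ofReal (jb ξ ^ (2*s)) * gfun F ξ)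
        = ∫⁻ θ in Set.Ioc (0:ℝ) 1, ∫⁻ ξ in Γ,
            ENNReal.ofReal (jb ξ ^ (2*s)) *
              ENNReal.ofReal (‖fderiv ℝ F (ξ + θ • (latt (flr ξ) - ξ))‖ ^ 2) := by
      rw [← lintegral_lintegral_swap]
      · apply lintegral_congr
        intro ξ
        rw [gfun, ← lintegral_const_mul' _ _ ENNReal.ofReal_ne_top]
      · exact ((ENNReal.measurable_ofReal.comp (hjbr.measurable.comp measurable_fst)).mul
          hmΦ).aemeasurable
    rw [hswap]
    calc (∫⁻ θ in Set.Ioc (0:ℝ) 1, ∫⁻ ξ in Γ,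
            ENNReal.ofReal (jb ξ ^ (2*s)) *
              ENNReal.ofReal (‖fderiv ℝ F (ξ + θ • (latt (flr ξ) - ξ))‖ ^ 2))
        ≤ ∫⁻ _ in Set.Ioc (0:ℝ) 1, B := by
          apply setLIntegral_mono' measurableSet_Ioc
          intro θ hθ
          have hbd := hgB θ (Set.Ioc_subset_Icc_self hθ)
          refine le_trans (le_of_eq (lintegral_congr fun ξ => ?_)) hbd
          rw [← ENNReal.ofReal_mul (Real.rpow_nonneg (jb_pos ξ).le _), mul_comm]
      _ ≤ B := by
          rw [setLIntegral_const, Real.volume_Ioc]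
          simp
  -- the summand and its nonnegativity
  set f : {n : Fin d → ℤ // latt n ∈ Γ₁} → ℝ := fun n =>
    ‖F (latt (n : Fin d → ℤ))‖ ^ 2 * jb (latt (n : Fin d → ℤ)) ^ (2 * s) with hfdef
  have hfnn : ∀ n, 0 ≤ f n := fun n =>
    mul_nonneg (sq_nonneg _) (Real.rpow_nonneg (jb_pos _).le _)
  -- split into small and large lattice points
  apply (summable_subtype_and_compl
    (s := {m : {n : Fin d → ℤ // latt n ∈ Γ₁} | ‖latt (m : Fin d → ℤ)‖ < r})).1
  constructor
  · -- finitely many small points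
    have hfin : {m : {n : Fin d → ℤ // latt n ∈ Γ₁} | ‖latt (m : Fin d → ℤ)‖ < r}.Finite := by
      apply Set.Finite.preimage (Subtype.val_injective.injOn) (finite_small r)
    have := hfin.to_subtype
    exact Summable.of_finite
  · -- large points : bounded partial sums
    apply summable_of_sum_le (c := C.toReal) (fun m => hfnn _)
    intro u
    -- the ENNReal partial sum bound
    have hEN : (∑ m ∈ u, ENNReal.ofReal (f m.1)) ≤ C := by
      have hsub : ∀ m : ↥({m : {n : Fin d → ℤ // latt n ∈ Γ₁} |
          ‖latt (m : Fin d → ℤ)‖ < r}ᶜ), cube' (m.1 : Fin d → ℤ) ⊆ Γ := by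
        intro m
        refine (cube'_subset _).trans (hcubes _ m.1.2 ?_)
        have := m.2
        simp only [Set.mem_compl_iff, Set.mem_setOf_eq, not_lt] at this
        exact this
      calc (∑ m ∈ u, ENNReal.ofReal (f m.1))
          ≤ ∑ m ∈ u, ∫⁻ ξ in cube' (m.1 : Fin d → ℤ), h ξ := by
            apply Finset.sum_le_sum
            intro m _
            have heq : ENNReal.ofReal (f m.1)
                = ∫⁻ _ in cube' (m.1 : Fin d → ℤ), ENNReal.ofReal (f m.1) := by
              rw [setLIntegral_const, volume_cube', mul_one]
            rw [heq]
            apply setLIntegral_mono hmh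
            intro ξ hξ
            exact key hF s _ hξ
        _ = ∫⁻ ξ in ⋃ m ∈ u, cube' (m.1 : Fin d → ℤ), h ξ := by
            rw [lintegral_biUnion_finset]
            · intro x hx y hy hxy
              apply cube'_disj
              intro hco
              exact hxy (Subtype.ext (Subtype.ext hco))
            · exact fun m _ => measurableSet_cube' _
        _ ≤ ∫⁻ ξ in Γ, h ξ := by
            apply lintegral_mono_set
            intro ξ hξ
            rw [Set.mem_iUnion₂] at hξ
            obtain ⟨m, hm, hmem⟩ := hξ
            exact hsub m hmem
        _ ≤ C := by
            rw [hhdef]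
            rw [lintegral_const_mul' _ _ ENNReal.ofReal_ne_top]
            apply mul_le_mul_right
            rw [lintegral_add_left (hmF2.const_mul _),
              lintegral_const_mul' _ _ ENNReal.ofReal_ne_top,
              lintegral_const_mul' _ _ ENNReal.ofReal_ne_top]
            exact add_le_add_right (mul_le_mul_right step4 _) _
    -- back to reals
    have h1 : (∑ m ∈ u, f m.1) = (∑ m ∈ u, ENNReal.ofReal (f m.1)).toReal := by
      rw [ENNReal.toReal_sum (fun m _ => ENNReal.ofReal_ne_top)]
      exact Finset.sum_congr rfl fun m _ => (ENNReal.toReal_ofReal (hfnn _)).symm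
    rw [h1]
    exact ENNReal.toReal_mono hCfin hEN
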